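/- arXiv:math/0703629 — 4 statements merged into one kernel-verified Lean document; each statement's English description precedes it below -/
import Mathlib

section
/- In any PN space (V, ν, τ, τ*), if |α| ≤ |β| for scalars α, β ∈ ℝ, then ν_{βp} ≤ ν_{αp} for every p ∈ V. -/
open Filter Topology Set

/-- A distribution function in `Δ⁺`: nondecreasing, left-continuous,
vanishing on `(-∞,0]` and bounded by `1`. -/
structure DistFun where
  toFun : ℝ → ℝ
  mono' : Monotone toFun
  leftCont' : ∀ x, Filter.Tendsto toFun (nhdsWithin x (Set.Iio x)) (nhds (toFun x))
  zero' : ∀ x ≤ (0 : ℝ), toFun x = 0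
  le_one' : ∀ x, toFun x ≤ 1

instance : CoeFun DistFun (fun _ => ℝ → ℝ) := ⟨DistFun.toFun⟩

/-- Pointwise order on `Δ⁺`. -/
instance : LE DistFun := ⟨fun F G => ∀ x, F.toFun x ≤ G.toFun x⟩

/-- The unit step distribution function `ε_a` for `a ≥ 0`. -/
noncomputable def unitStep (a : ℝ) (_ha : 0 ≤ a) : DistFun where
  toFun x := if x ≤ a then 0 else 1
  mono' := by
    intro x y hxy
    by_cases hx : x ≤ a <;> by_cases hy : y ≤ a <;> simp [hx, hy] <;> linarith
  leftCont' := by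
    intro x
    by_cases hx : x ≤ a
    · have h : (fun y => if y ≤ a then (0:ℝ) else 1) =ᶠ[nhdsWithin x (Set.Iio x)]
          fun _ => (0:ℝ) := by
        filter_upwards [self_mem_nhdsWithin] with y hy
        exact if_pos ((le_of_lt hy).trans hx)
      simpa [if_pos hx] using (tendsto_const_nhds (α := ℝ)).congr' h.symm
    · have hax : a < x := not_le.mp hx
      have h : (fun y => if y ≤ a then (0:ℝ) else 1) =ᶠ[nhdsWithin x (Set.Iio x)]
          fun _ => (1:ℝ) := by
        filter_upwards [(eventually_gt_nhds hax).filter_mono nhdsWithin_le_nhds] with y hy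
        exact if_neg (not_le.mpr hy)
      simpa [if_neg hx] using (tendsto_const_nhds (α := ℝ)).congr' h.symm
  zero' := fun x hx => if_pos (hx.trans _ha)
  le_one' := by intro x; by_cases h : x ≤ a <;> simp [h]

/-- The maximal element `ε₀` of `Δ⁺`. -/
noncomputable def eps0 : DistFun := unitStep 0 le_rfl

/-- The one-sided Lévy condition `(F,G;h)`. -/
def levyCond (F G : DistFun) (h : ℝ) : Prop :=
  ∀ x : ℝ, -(1/h) < x → x < 1/h →
    F.toFun (x - h) - h ≤ G.toFun x ∧ G.toFun x ≤ F.toFun (x + h) + h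

/-- The Sibley (modified Lévy) metric on `Δ⁺`. -/
noncomputable def sibley (F G : DistFun) : ℝ :=
  sInf {h : ℝ | 0 < h ∧ h ≤ 1 ∧ levyCond F G h ∧ levyCond G F h}

/-- Triangle function: associative, commutative, nondecreasing binary
operation on `Δ⁺` with identity `ε₀`. -/
structure IsTriangleFun (τ : DistFun → DistFun → DistFun) : Prop where
  comm : ∀ F G, τ F G = τ G F
  assoc : ∀ F G H, τ (τ F G) H = τ F (τ G H)
  mono : ∀ F G H, F ≤ G → τ F H ≤ τ G H
  ident : ∀ F, τ F eps0 = F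

/-- Continuity of a triangle function w.r.t. the Sibley metric (sequential form). -/
def TriCont (τ : DistFun → DistFun → DistFun) : Prop :=
  ∀ (F G : ℕ → DistFun) (F₀ G₀ : DistFun),
    Filter.Tendsto (fun n => sibley (F n) F₀) Filter.atTop (nhds 0) →
    Filter.Tendsto (fun n => sibley (G n) G₀) Filter.atTop (nhds 0) →
    Filter.Tendsto (fun n => sibley (τ (F n) (G n)) (τ F₀ G₀)) Filter.atTop (nhds 0)

/-- Sup-continuity of a triangle function: `τ (sup_i F_i) G = sup_i τ (F_i) G`
(pointwise). -/
def SupCont (τ : DistFun → DistFun → DistFun) : Prop :=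
  ∀ {ι : Type} [Nonempty ι] (F : ι → DistFun) (S G : DistFun),
    (∀ x, S.toFun x = ⨆ i, (F i).toFun x) →
    ∀ x, (τ S G).toFun x = ⨆ i, (τ (F i) G).toFun x

/-- Domination `τ₁ ≫ τ₂` of triangle functions. -/
def Dominates (τ₁ τ₂ : DistFun → DistFun → DistFun) : Prop :=
  ∀ F₁ F₂ G₁ G₂, τ₂ (τ₁ F₁ F₂) (τ₁ G₁ G₂) ≤ τ₁ (τ₂ F₁ G₁) (τ₂ F₂ G₂)

/-- A probabilistic pseudo-normed space `(V, ν, τ, τ*)`. -/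
structure IsPPNSpace {V : Type*} [AddCommGroup V] [Module ℝ V]
    (ν : V → DistFun) (τ τs : DistFun → DistFun → DistFun) : Prop where
  tri : IsTriangleFun τ
  tri_s : IsTriangleFun τs
  cont : TriCont τ
  cont_s : TriCont τs
  tau_le : ∀ F G, τ F G ≤ τs F G
  N1' : ν 0 = eps0
  N2 : ∀ p, ν (-p) = ν p
  N3 : ∀ p q, τ (ν p) (ν q) ≤ ν (p + q)
  N4 : ∀ (p : V) (α : ℝ), 0 ≤ α → α ≤ 1 →
    ν p ≤ τs (ν (α • p)) (ν ((1 - α) • p))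

/-- A probabilistic normed space `(V, ν, τ, τ*)`. -/
structure IsPNSpace {V : Type*} [AddCommGroup V] [Module ℝ V]
    (ν : V → DistFun) (τ τs : DistFun → DistFun → DistFun)
    extends IsPPNSpace ν τ τs : Prop where
  N1 : ∀ p, ν p = eps0 ↔ p = 0

/-- The strong topology of a PN space, generated by the strong neighbourhoods
`N_p(t) = {q : ν_{q-p}(t) > 1 - t}`. -/
def strongTop {V : Type*} [AddCommGroup V] (ν : V → DistFun) : TopologicalSpace V :=
  TopologicalSpace.generateFrom
    {S | ∃ (p : V) (t : ℝ), 0 < t ∧ S = {q | 1 - t < (ν (q - p)).toFun t}}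

/-- A set is closed in the strong topology. -/
def StrongClosed {V : Type*} [AddCommGroup V] (ν : V → DistFun) (S : Set V) : Prop :=
  @IsClosed V (strongTop ν) S

/-- A strong Cauchy sequence. -/
def StrongCauchy {V : Type*} [AddCommGroup V] (ν : V → DistFun) (p : ℕ → V) : Prop :=
  ∀ t : ℝ, 0 < t → ∃ N : ℕ, ∀ m n, N ≤ m → N ≤ n → 1 - t < (ν (p n - p m)).toFun t

/-- Strong convergence of a sequence to a point. -/
def StrongConv {V : Type*} [AddCommGroup V] (ν : V → DistFun) (p : ℕ → V) (x : V) : Prop :=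
  ∀ t : ℝ, 0 < t → ∃ N : ℕ, ∀ n, N ≤ n → 1 - t < (ν (p n - x)).toFun t

/-- Strong completeness. -/
def StrongComplete {V : Type*} [AddCommGroup V] (ν : V → DistFun) : Prop :=
  ∀ p : ℕ → V, StrongCauchy ν p → ∃ x, StrongConv ν p x

/-!
Axiom (N4) with `ε₀` as the top of `Δ⁺` gives `ν_q ≤ τ*(ν_{λq}, ν_{(1-λ)q}) ≤ τ*(ν_{λq}, ε₀) = ν_{λq}`
for `λ ∈ [0,1]`, so shrinking a vector by a factor in `[0,1]` can only increase its norm.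
Apply this with `λ = |α|/|β|`, after using (N2) to replace `α, β` by `|α|, |β|`.
-/

theorem DistFun.le_eps0 (F : DistFun) : F ≤ eps0 := by
  intro x
  by_cases hx : x ≤ 0
  · simp [eps0, unitStep, hx, F.zero' x hx]
  · simp [eps0, unitStep, hx, F.le_one' x]

theorem DistFun.le_trans {F G H : DistFun} (hFG : F ≤ G) (hGH : G ≤ H) : F ≤ H :=
  fun x => (hFG x).trans (hGH x)

theorem IsTriangleFun.le_left {τ : DistFun → DistFun → DistFun} (hτ : IsTriangleFun τ)
    (F G : DistFun) : τ F G ≤ F := by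
  have h := hτ.mono G eps0 F G.le_eps0
  rwa [hτ.comm G, hτ.comm eps0, hτ.ident] at h

namespace IsPPNSpace

variable {V : Type*} [AddCommGroup V] [Module ℝ V]
  {ν : V → DistFun} {τ τs : DistFun → DistFun → DistFun}

theorem le_smul_of_nonneg_of_le_one (h : IsPPNSpace ν τ τs) {c : ℝ} (hc₀ : 0 ≤ c)
    (hc₁ : c ≤ 1) (q : V) : ν q ≤ ν (c • q) :=
  DistFun.le_trans (h.N4 q c hc₀ hc₁) (h.tri_s.le_left _ _)

theorem abs_smul_eq (h : IsPPNSpace ν τ τs) (a : ℝ) (p : V) : ν (|a| • p) = ν (a • p) := by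
  rcases abs_choice a with ha | ha
  · rw [ha]
  · rw [ha, neg_smul, h.N2]

theorem smul_le_smul_of_le (h : IsPPNSpace ν τ τs) {a b : ℝ} (ha : 0 ≤ a) (hab : a ≤ b)
    (p : V) : ν (b • p) ≤ ν (a • p) := by
  rcases (ha.trans hab).eq_or_lt with rfl | hb
  · rw [le_antisymm hab ha]
    exact fun _ => le_rfl
  have hfactor : a = (a / b) * b := (div_mul_cancel₀ a hb.ne').symm
  rw [hfactor, mul_smul]
  exact h.le_smul_of_nonneg_of_le_one (div_nonneg ha hb.le) ((div_le_one hb).mpr hab) _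

end IsPPNSpace

theorem pn_norm_scalar_antitone {V : Type*} [AddCommGroup V] [Module ℝ V]
    (ν : V → DistFun) (τ τs : DistFun → DistFun → DistFun)
    (h : IsPNSpace ν τ τs) (α β : ℝ) (hab : |α| ≤ |β|) (p : V) :
    ν (β • p) ≤ ν (α • p) := by
  rw [← h.abs_smul_eq β, ← h.abs_smul_eq α]
  exact h.smul_le_smul_of_le (abs_nonneg α) hab p
end

section
/- Let (V, ν, τ, τ*) be a PN space with τ, τ* sup-continuous, W a closed subspace, and π : V → V/W the canonical projection. Then for every p ∈ V and t > 0, π(N_p(t)) = N'_{p+W}(t), where N_p(t) = {q ∈ V : ν_{q−p}(t) > 1−t} and N'_{p+W}(t) = {q+W : ν̄_{(q−p)+W}(t) > 1−t}; in particular π is an open map for the strong topologies. -/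
open Filter Topology Set

/-! Every point `q` of a strong neighbourhood `N_p(t)` has a neighbourhood `N_q(s) ⊆ N_p(t)`:
otherwise there are `r_n ∈ N_q(1/(n+1)) \ N_p(t)`, so `ν_{r_n - q} → ε₀` and, by continuity of `τ`,
`τ(ν_{r_n - q}, ν_{q - p}) → ν_{q - p}` in the Sibley metric; by `N3` and left continuity of
`ν_{q - p}` at `t` this forces `ν_{r_n - p}(t) > 1 - t` for large `n`. Hence the `N_q(s)` form a
basis of the strong topology. Since `ν̄_{(q-p)+W}(t)` is a supremum over the coset,
`ν̄_{(q-p)+W}(t) > 1 - t` exactly when some representative `q + w` lies in `N_p(t)`, which is the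
identity `π(N_p(t)) = N'_{p+W}(t)`; so `π` maps basic open sets to basic open sets. -/

def strongNbhd {V : Type*} [AddCommGroup V] (ν : V → DistFun) (p : V) (t : ℝ) : Set V :=
  {q | 1 - t < (ν (q - p)).toFun t}

lemma eps0_apply (x : ℝ) : eps0.toFun x = if x ≤ 0 then 0 else 1 := rfl

namespace DistFun

lemma nonneg (F : DistFun) (x : ℝ) : 0 ≤ F.toFun x := by
  rcases le_or_gt x 0 with hx | hx
  · exact (F.zero' x hx).ge
  · simpa [F.zero' 0 le_rfl] using F.mono' hx.le

lemma exists_pos_lt_apply_sub_sub (F : DistFun) {t c : ℝ} (ht : 0 < t) (hc : c < F.toFun t) :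
    ∃ h, 0 < h ∧ h < 1 / t ∧ c < F.toFun (t - h) - h := by
  have hshift : Tendsto (fun h => t - h) (𝓝[>] 0) (𝓝[<] t) := by
    refine tendsto_nhdsWithin_iff.2 ⟨?_, ?_⟩
    · simpa using (tendsto_const_nhds.sub tendsto_id : Tendsto (fun h : ℝ => t - h) (𝓝 0) _)
        |>.mono_left nhdsWithin_le_nhds
    · filter_upwards [self_mem_nhdsWithin] with h (hh : 0 < h)
      exact sub_lt_self t hh
  have hlim : Tendsto (fun h => F.toFun (t - h) - h) (𝓝[>] 0) (𝓝 (F.toFun t - 0)) :=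
    ((F.leftCont' t).comp hshift).sub (tendsto_id.mono_left nhdsWithin_le_nhds)
  have hsmall : ∀ᶠ h in 𝓝[>] (0 : ℝ), h < 1 / t :=
    (eventually_lt_nhds (one_div_pos.2 ht)).filter_mono nhdsWithin_le_nhds
  exact ((eventually_mem_nhdsWithin (s := Ioi 0)).and (hsmall.and
    (hlim.eventually (eventually_gt_nhds (by simpa using hc))))).exists

end DistFun

lemma levyCond_one (F G : DistFun) : levyCond F G 1 := fun x _ _ =>
  ⟨by linarith [F.le_one' (x - 1), G.nonneg x], by linarith [G.le_one' x, F.nonneg (x + 1)]⟩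

lemma levyCond_self (F : DistFun) {h : ℝ} (h0 : 0 ≤ h) : levyCond F F h := fun x _ _ =>
  ⟨by linarith [F.mono' (by linarith : x - h ≤ x)], by linarith [F.mono' (by linarith : x ≤ x + h)]⟩

lemma sibley_le {F G : DistFun} {h : ℝ} (h0 : 0 < h) (h1 : h ≤ 1) (hFG : levyCond F G h)
    (hGF : levyCond G F h) : sibley F G ≤ h :=
  csInf_le ⟨0, fun _ hy => hy.1.le⟩ ⟨h0, h1, hFG, hGF⟩

lemma sibley_nonneg (F G : DistFun) : 0 ≤ sibley F G :=
  le_csInf ⟨1, one_pos, le_rfl, levyCond_one F G, levyCond_one G F⟩ fun _ hy => hy.1.le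

lemma sibley_self (F : DistFun) : sibley F F = 0 := by
  refine le_antisymm (le_of_forall_pos_le_add fun ε hε => ?_) (sibley_nonneg F F)
  have hpos : 0 < min ε 1 := lt_min hε one_pos
  calc sibley F F ≤ min ε 1 :=
        sibley_le hpos (min_le_right _ _) (levyCond_self F hpos.le) (levyCond_self F hpos.le)
    _ ≤ 0 + ε := by simp

lemma sibley_eps0_le {F : DistFun} {s : ℝ} (hs : 0 < s) (hs1 : s ≤ 1)
    (hF : 1 - s < F.toFun s) : sibley F eps0 ≤ s := by
  refine sibley_le hs hs1 (fun x _ _ => ?_) (fun x _ _ => ?_)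
  · rw [eps0_apply]
    split_ifs with hx
    · exact ⟨by linarith [F.zero' (x - s) (by linarith)], by linarith [F.nonneg (x + s)]⟩
    · exact ⟨by linarith [F.le_one' (x - s)], by linarith [F.mono' (by linarith : s ≤ x + s)]⟩
  · constructor
    · rw [eps0_apply]
      split_ifs with hx
      · linarith [F.nonneg x]
      · linarith [F.mono' (by linarith : s ≤ x)]
    · rw [eps0_apply]
      split_ifs with hx
      · linarith [F.zero' x (by linarith)]
      · linarith [F.le_one' x]

lemma tendsto_sibley_eps0 {F : ℕ → DistFun}
    (hF : ∀ n : ℕ, 1 - 1 / (n + 1 : ℝ) < (F n).toFun (1 / (n + 1))) :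
    Tendsto (fun n => sibley (F n) eps0) atTop (𝓝 0) := by
  refine squeeze_zero (fun n => sibley_nonneg _ _)
    (fun n => sibley_eps0_le (by positivity) ?_ (hF n)) tendsto_one_div_add_atTop_nhds_zero_nat
  exact (div_le_one (by positivity)).2 (by linarith [n.cast_nonneg (α := ℝ)])

lemma apply_sub_sub_le_of_sibley_lt {F G : DistFun} {h t : ℝ} (ht : 0 < t) (hht : h < 1 / t)
    (hs : sibley F G < h) : G.toFun (t - h) - h ≤ F.toFun t := by
  obtain ⟨h', ⟨h'pos, -, -, hGF⟩, hlt⟩ :=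
    exists_lt_of_csInf_lt (by exact ⟨1, one_pos, le_rfl, levyCond_one F G, levyCond_one G F⟩) hs
  have htlt : t < 1 / h' := by
    rw [lt_div_iff₀ h'pos]
    nlinarith [(lt_div_iff₀ ht).mp hht]
  have hinv : (0 : ℝ) < 1 / h' := by positivity
  linarith [(hGF t (by linarith) htlt).1, G.mono' (by linarith : t - h ≤ t - h')]

section StrongTopology

variable {V : Type*} [AddCommGroup V]

lemma strongNbhd_mono (ν : V → DistFun) (p : V) {s t : ℝ} (hst : s ≤ t) :
    strongNbhd ν p s ⊆ strongNbhd ν p t := fun q (hq : 1 - s < (ν (q - p)).toFun s) =>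
  show 1 - t < (ν (q - p)).toFun t by linarith [(ν (q - p)).mono' hst]

lemma mem_strongNbhd_self {ν : V → DistFun} (h0 : ν 0 = eps0) (p : V) {t : ℝ} (ht : 0 < t) :
    p ∈ strongNbhd ν p t := by
  show 1 - t < (ν (p - p)).toFun t
  rw [sub_self, h0, eps0_apply, if_neg (not_le.2 ht)]
  linarith

lemma isOpen_strongNbhd (ν : V → DistFun) (p : V) {t : ℝ} (ht : 0 < t) :
    IsOpen[strongTop ν] (strongNbhd ν p t) :=
  TopologicalSpace.isOpen_generateFrom_of_mem ⟨p, t, ht, rfl⟩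

variable [Module ℝ V] {ν : V → DistFun} {τ τs : DistFun → DistFun → DistFun}

lemma IsPPNSpace.eventually_mem_strongNbhd (h : IsPPNSpace ν τ τs) {p q : V} {t : ℝ}
    (ht : 0 < t) (hq : q ∈ strongNbhd ν p t) {u : ℕ → V}
    (hu : ∀ n : ℕ, u n ∈ strongNbhd ν q (1 / (n + 1))) :
    ∀ᶠ n in atTop, u n ∈ strongNbhd ν p t := by
  set G := ν (q - p)
  have hidG : τ eps0 G = G := by rw [h.tri.comm, h.tri.ident]
  have hlim : Tendsto (fun n => sibley (τ (ν (u n - q)) G) G) atTop (𝓝 0) := by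
    simpa only [hidG] using
      h.cont _ (fun _ => G) eps0 G (tendsto_sibley_eps0 hu) (by simp [sibley_self])
  obtain ⟨δ, hδ, hδt, hGδ⟩ := G.exists_pos_lt_apply_sub_sub ht hq
  filter_upwards [hlim.eventually (eventually_lt_nhds hδ)] with n hn
  calc 1 - t < G.toFun (t - δ) - δ := hGδ
    _ ≤ (τ (ν (u n - q)) G).toFun t := apply_sub_sub_le_of_sibley_lt ht hδt hn
    _ ≤ (ν (u n - q + (q - p))).toFun t := h.N3 _ _ t
    _ = (ν (u n - p)).toFun t := by rw [sub_add_sub_cancel]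

lemma IsPPNSpace.exists_strongNbhd_subset (h : IsPPNSpace ν τ τs) {p q : V} {t : ℝ}
    (ht : 0 < t) (hq : q ∈ strongNbhd ν p t) :
    ∃ s, 0 < s ∧ strongNbhd ν q s ⊆ strongNbhd ν p t := by
  by_contra! hcon
  choose u hu hup using fun n : ℕ => not_subset.1 (hcon (1 / (n + 1)) (by positivity))
  obtain ⟨n, hn⟩ := (h.eventually_mem_strongNbhd ht hq hu).exists
  exact hup n hn

lemma IsPPNSpace.exists_strongNbhd_subset_of_isOpen (h : IsPPNSpace ν τ τs) {U : Set V}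
    (hU : IsOpen[strongTop ν] U) : ∀ q ∈ U, ∃ s, 0 < s ∧ strongNbhd ν q s ⊆ U := by
  induction hU with
  | basic S hS =>
    obtain ⟨p, t, ht, rfl⟩ := hS
    exact fun q hq => h.exists_strongNbhd_subset ht hq
  | univ => exact fun _ _ => ⟨1, one_pos, subset_univ _⟩
  | inter U₁ U₂ _ _ ih₁ ih₂ =>
    rintro q ⟨hq₁, hq₂⟩
    obtain ⟨s₁, hs₁, hsub₁⟩ := ih₁ q hq₁
    obtain ⟨s₂, hs₂, hsub₂⟩ := ih₂ q hq₂
    exact ⟨min s₁ s₂, lt_min hs₁ hs₂,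
      subset_inter ((strongNbhd_mono ν q (min_le_left _ _)).trans hsub₁)
        ((strongNbhd_mono ν q (min_le_right _ _)).trans hsub₂)⟩
  | sUnion S _ ih =>
    rintro q ⟨U, hUS, hqU⟩
    obtain ⟨s, hs, hsub⟩ := ih U hUS q hqU
    exact ⟨s, hs, hsub.trans (subset_sUnion_of_mem hUS)⟩

end StrongTopology

section Quotient

variable {V : Type*} [AddCommGroup V] {R : Type*} [Ring R] [Module R V] {W : Submodule R V}
  {ν : V → DistFun} {ν' : V ⧸ W → DistFun}

lemma Submodule.image_mkQ_strongNbhd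
    (hν' : ∀ (p : V) (x : ℝ), (ν' (W.mkQ p)).toFun x = ⨆ q : W, (ν (p + (q : V))).toFun x)
    (p : V) (t : ℝ) : W.mkQ '' strongNbhd ν p t = strongNbhd ν' (W.mkQ p) t := by
  have hbdd : ∀ v : V, BddAbove (range fun w : W => (ν (v + w)).toFun t) :=
    fun v => ⟨1, by rintro _ ⟨w, rfl⟩; exact (ν _).le_one' t⟩
  ext a
  constructor
  · rintro ⟨q, hq, rfl⟩
    show 1 - t < (ν' (W.mkQ q - W.mkQ p)).toFun t
    rw [← map_sub, hν']
    exact hq.trans_le (by simpa using le_ciSup (hbdd (q - p)) 0)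
  · obtain ⟨r, rfl⟩ := W.mkQ_surjective a
    intro (ha : 1 - t < (ν' (W.mkQ r - W.mkQ p)).toFun t)
    rw [← map_sub, hν'] at ha
    obtain ⟨w, hw⟩ := exists_lt_of_lt_ciSup ha
    refine ⟨r + w, show 1 - t < _ by rwa [add_sub_right_comm], ?_⟩
    simp [(Submodule.Quotient.mk_eq_zero W).2 w.2]

end Quotient

lemma IsPPNSpace.isOpenMap_mkQ {V : Type*} [AddCommGroup V] [Module ℝ V] {ν : V → DistFun}
    {τ τs : DistFun → DistFun → DistFun} (h : IsPPNSpace ν τ τs) {W : Submodule ℝ V}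
    {ν' : V ⧸ W → DistFun}
    (hν' : ∀ (p : V) (x : ℝ), (ν' (W.mkQ p)).toFun x = ⨆ q : W, (ν (p + (q : V))).toFun x) :
    @IsOpenMap V (V ⧸ W) (strongTop ν) (strongTop ν') W.mkQ := by
  intro U hU
  refine (@isOpen_iff_forall_mem_open _ (strongTop ν') _).2 ?_
  rintro _ ⟨q, hqU, rfl⟩
  obtain ⟨s, hs, hsU⟩ := h.exists_strongNbhd_subset_of_isOpen hU q hqU
  refine ⟨W.mkQ '' strongNbhd ν q s, image_mono hsU, ?_,
    mem_image_of_mem _ (mem_strongNbhd_self h.N1' q hs)⟩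
  rw [Submodule.image_mkQ_strongNbhd hν']
  exact isOpen_strongNbhd ν' _ hs

theorem projection_maps_nbhd_onto_and_open_general {V : Type*} [AddCommGroup V] [Module ℝ V]
    (ν : V → DistFun) (τ τs : DistFun → DistFun → DistFun)
    (h : IsPNSpace ν τ τs)
    (W : Submodule ℝ V)
    (ν' : V ⧸ W → DistFun)
    (hν' : ∀ (p : V) (x : ℝ),
      (ν' (W.mkQ p)).toFun x = ⨆ q : W, (ν (p + (q : V))).toFun x) :
    (∀ (p : V) (t : ℝ), 0 < t →
      (W.mkQ '' {q : V | 1 - t < (ν (q - p)).toFun t})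
        = {a : V ⧸ W | 1 - t < (ν' (a - W.mkQ p)).toFun t}) ∧
    @IsOpenMap V (V ⧸ W) (strongTop ν) (strongTop ν') W.mkQ :=
  ⟨fun p t _ => Submodule.image_mkQ_strongNbhd hν' p t, h.isOpenMap_mkQ hν'⟩

theorem projection_maps_nbhd_onto_and_open {V : Type*} [AddCommGroup V] [Module ℝ V]
    (ν : V → DistFun) (τ τs : DistFun → DistFun → DistFun)
    (h : IsPNSpace ν τ τs) (hτ : SupCont τ) (hτs : SupCont τs)
    (W : Submodule ℝ V)
    (hW : StrongClosed ν (W : Set V))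
    (ν' : V ⧸ W → DistFun)
    (hν' : ∀ (p : V) (x : ℝ),
      (ν' (W.mkQ p)).toFun x = ⨆ q : W, (ν (p + (q : V))).toFun x) :
    (∀ (p : V) (t : ℝ), 0 < t →
      (W.mkQ '' {q : V | 1 - t < (ν (q - p)).toFun t})
        = {a : V ⧸ W | 1 - t < (ν' (a - W.mkQ p)).toFun t}) ∧
    @IsOpenMap V (V ⧸ W) (strongTop ν) (strongTop ν') W.mkQ :=
  projection_maps_nbhd_onto_and_open_general ν τ τs h W ν' hν'
end

section
/- Let (V, ‖·‖) be a normed space with ν_p := ε_{‖p‖}, and W a closed subspace. For each coset p+W, sup_{w∈W} ε_{‖p+w‖} = ε_{‖p+W‖'}, where ‖p+W‖' = inf_{w∈W} ‖p+w‖ is the quotient norm; i.e., the quotient probabilistic norm of the PN space induced by ‖·‖ coincides with the probabilistic norm induced by the quotient norm on V/W. -/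
open Filter Topology Set

theorem unitStep_apply (a : ℝ) (ha : 0 ≤ a) (x : ℝ) :
    (unitStep a ha).toFun x = if x ≤ a then 0 else 1 :=
  rfl

theorem iSup_unitStep_apply {ι : Type*} [Nonempty ι] (a : ι → ℝ) (ha : ∀ i, 0 ≤ a i) (x : ℝ) :
    ⨆ i, (unitStep (a i) (ha i)).toFun x = (unitStep (⨅ i, a i) (Real.iInf_nonneg ha)).toFun x := by
  have hbdd : BddBelow (range a) := ⟨0, by rintro _ ⟨i, rfl⟩; exact ha i⟩
  by_cases hx : x ≤ ⨅ i, a i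
  · have hzero : ∀ i, (unitStep (a i) (ha i)).toFun x = 0 := fun i =>
      if_pos (hx.trans (ciInf_le hbdd i))
    simp only [hzero, ciSup_const, unitStep_apply, if_pos hx]
  · obtain ⟨i, hi⟩ := exists_lt_of_ciInf_lt (not_le.mp hx)
    rw [unitStep_apply, if_neg hx]
    have hle_one : ∀ j, (unitStep (a j) (ha j)).toFun x ≤ 1 := fun j => (unitStep _ _).le_one' x
    have hone : (unitStep (a i) (ha i)).toFun x = 1 := if_neg (not_le.mpr hi)
    refine le_antisymm (ciSup_le hle_one) ?_
    rw [← hone]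
    exact le_ciSup ⟨1, forall_mem_range.2 hle_one⟩ i

theorem quotient_step_norm_general {V : Type*} [NormedAddCommGroup V] [NormedSpace ℝ V]
    (W : Submodule ℝ V) (p : V) (x : ℝ) :
    (⨆ w : W, (unitStep ‖p + (w : V)‖ (norm_nonneg _)).toFun x)
      = (unitStep (⨅ w : W, ‖p + (w : V)‖)
          (Real.iInf_nonneg fun w => norm_nonneg _)).toFun x :=
  iSup_unitStep_apply (fun w : W => ‖p + (w : V)‖) (fun _ => norm_nonneg _) x

theorem quotient_step_norm {V : Type*} [NormedAddCommGroup V] [NormedSpace ℝ V]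
    (W : Submodule ℝ V) (hW : IsClosed (W : Set V)) (p : V) (x : ℝ) :
    (⨆ w : W, (unitStep ‖p + (w : V)‖ (norm_nonneg _)).toFun x)
      = (unitStep (⨅ w : W, ‖p + (w : V)‖)
          (Real.iInf_nonneg fun w => norm_nonneg _)).toFun x :=
  quotient_step_norm_general W p x
end

section
/- Let (V, ν, τ, τ*) be a PN space with τ, τ* sup-continuous and W a closed subspace with quotient norm ν̄_{p+W} = sup_{q∈W} ν_{p+q}. For every p ∈ V and ε > 0, there exists p' ∈ V with p'+W = p+W and d_S(ν_{p'}, ε₀) < d_S(ν̄_{p+W}, ε₀) + ε. -/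
open Filter Topology Set

section SibleyEps0

variable {F : DistFun} {h : ℝ}

lemma levyCond_eps0_left (h0 : 0 < h) (hF : ∀ y, h < y → 1 - h ≤ F.toFun y) :
    levyCond F eps0 h := by
  intro x _ _
  rcases le_or_gt x 0 with hx | hx
  · rw [eps0_apply, if_pos hx, F.zero' _ (by linarith)]
    exact ⟨by linarith, by linarith [F.nonneg (x + h)]⟩
  · rw [eps0_apply, if_neg hx.not_ge]
    exact ⟨by linarith [F.le_one' (x - h)], by linarith [hF (x + h) (by linarith)]⟩

lemma levyCond_eps0_right (h0 : 0 < h) (hF : ∀ y, h < y → 1 - h ≤ F.toFun y) :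
    levyCond eps0 F h := by
  intro x _ _
  constructor
  · rcases le_or_gt (x - h) 0 with hx | hx
    · rw [eps0_apply, if_pos hx]
      linarith [F.nonneg x]
    · rw [eps0_apply, if_neg hx.not_ge]
      linarith [hF x (by linarith)]
  · rcases le_or_gt (x + h) 0 with hx | hx
    · rw [eps0_apply, if_pos hx, F.zero' _ (by linarith)]
      linarith
    · rw [eps0_apply, if_neg hx.not_ge]
      linarith [F.le_one' x]

lemma sibley_eps0_nonneg (F : DistFun) : 0 ≤ sibley F eps0 :=
  Real.sInf_nonneg fun _ hh => hh.1.le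

lemma one_mem_sibley_eps0_set (F : DistFun) :
    (1 : ℝ) ∈ {h : ℝ | 0 < h ∧ h ≤ 1 ∧ levyCond F eps0 h ∧ levyCond eps0 F h} := by
  have hF : ∀ y, (1 : ℝ) < y → 1 - 1 ≤ F.toFun y := fun y _ => by linarith [F.nonneg y]
  exact ⟨one_pos, le_rfl, levyCond_eps0_left one_pos hF, levyCond_eps0_right one_pos hF⟩

lemma sibley_eps0_le_s14 (h0 : 0 < h) (hF : ∀ y, h < y → 1 - h ≤ F.toFun y) :
    sibley F eps0 ≤ h := by
  have hbdd : BddBelow {h : ℝ | 0 < h ∧ h ≤ 1 ∧ levyCond F eps0 h ∧ levyCond eps0 F h} :=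
    ⟨0, fun _ hh => hh.1.le⟩
  rcases le_or_gt h 1 with h1 | h1
  · exact csInf_le hbdd ⟨h0, h1, levyCond_eps0_left h0 hF, levyCond_eps0_right h0 hF⟩
  · exact (csInf_le hbdd (one_mem_sibley_eps0_set F)).trans h1.le

lemma sub_le_apply_of_levyCond_eps0 (h0 : 0 < h) (h1 : h ≤ 1) (hlev : levyCond eps0 F h)
    {y : ℝ} (hy : h < y) : 1 - h ≤ F.toFun y := by
  rcases h1.eq_or_lt with rfl | h1
  · linarith [F.nonneg y]
  have hinv : h < 1 / h := by rw [lt_div_iff₀ h0]; nlinarith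
  -- the Lévy condition only speaks about `x < 1/h`; larger `y` are reached by monotonicity
  set x := min y ((h + 1 / h) / 2)
  have hhx : h < x := lt_min hy (by linarith)
  have hx : x < 1 / h := (min_le_right _ _).trans_lt (by linarith)
  have hlow := (hlev x (by linarith [one_div_pos.2 h0]) hx).1
  rw [eps0_apply, if_neg (by linarith)] at hlow
  linarith [F.mono' (min_le_left y ((h + 1 / h) / 2))]

lemma sub_lt_apply_of_sibley_eps0_lt {s y : ℝ} (hs : sibley F eps0 < s) (hy : s < y) :
    1 - s < F.toFun y := by
  obtain ⟨t, ⟨t0, t1, -, hlev⟩, hts⟩ := exists_lt_of_csInf_lt ⟨1, one_mem_sibley_eps0_set F⟩ hs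
  linarith [sub_le_apply_of_levyCond_eps0 t0 t1 hlev (hts.trans hy)]

end SibleyEps0

theorem exists_sibley_eps0_lt_of_eq_iSup {ι : Type*} [Nonempty ι] (F : ι → DistFun)
    (G : DistFun) (hG : ∀ x, G.toFun x = ⨆ i, (F i).toFun x) {ε : ℝ} (hε : 0 < ε) :
    ∃ i, sibley (F i) eps0 < sibley G eps0 + ε := by
  set d := sibley G eps0
  have hd : 0 ≤ d := sibley_eps0_nonneg G
  have hsup : 1 - (d + ε / 3) < ⨆ i, (F i).toFun (d + 2 * ε / 3) :=
    hG _ ▸ sub_lt_apply_of_sibley_eps0_lt (by linarith) (by linarith)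
  obtain ⟨i, hi⟩ := exists_lt_of_lt_ciSup hsup
  refine ⟨i, (sibley_eps0_le_s14 (h := d + 2 * ε / 3) (by positivity) fun y hy => ?_).trans_lt
    (by linarith)⟩
  linarith [(F i).mono' hy.le]

theorem quotient_sibley_approx_general {V : Type*} [AddCommGroup V] [Module ℝ V]
    (ν : V → DistFun)
    (W : Submodule ℝ V)
    (ν' : V ⧸ W → DistFun)
    (hν' : ∀ (p : V) (x : ℝ),
      (ν' (W.mkQ p)).toFun x = ⨆ q : W, (ν (p + (q : V))).toFun x)
    (p : V) (ε : ℝ) (hε : 0 < ε) :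
    ∃ p' : V, W.mkQ p' = W.mkQ p ∧
      sibley (ν p') eps0 < sibley (ν' (W.mkQ p)) eps0 + ε := by
  obtain ⟨q, hq⟩ := exists_sibley_eps0_lt_of_eq_iSup (fun q : W => ν (p + q)) _ (hν' p) hε
  refine ⟨p + q, ?_, hq⟩
  rw [map_add, W.mkQ_apply (q : V), (Submodule.Quotient.mk_eq_zero W).2 q.2, add_zero]

theorem quotient_sibley_approx {V : Type*} [AddCommGroup V] [Module ℝ V]
    (ν : V → DistFun) (τ τs : DistFun → DistFun → DistFun)
    (h : IsPNSpace ν τ τs) (hτ : SupCont τ) (hτs : SupCont τs)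
    (W : Submodule ℝ V)
    (hW : StrongClosed ν (W : Set V))
    (ν' : V ⧸ W → DistFun)
    (hν' : ∀ (p : V) (x : ℝ),
      (ν' (W.mkQ p)).toFun x = ⨆ q : W, (ν (p + (q : V))).toFun x)
    (p : V) (ε : ℝ) (hε : 0 < ε) :
    ∃ p' : V, W.mkQ p' = W.mkQ p ∧
      sibley (ν p') eps0 < sibley (ν' (W.mkQ p)) eps0 + ε :=
  quotient_sibley_approx_general ν W ν' hν' p ε hε
end
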